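/- arXiv:1002.2161 — 2 statements merged into one kernel-verified Lean document; each statement's English description precedes it below -/
import Mathlib

section
/- With S_F and S_G as above and Γ̂ the regularized Hamiltonian of the planar pairwise symmetric four-body problem (with parameters m > 0 and Ê fixed), one has Γ̂ ∘ S_F = Γ̂ and Γ̂ ∘ S_G = Γ̂. -/
noncomputable section

/-- The regularized Hamiltonian Γ̂ of the planar pairwise symmetric four-body
problem with mass parameter `m` and energy parameter `E`. -/
def GammaHat (m E u1 u2 u3 u4 v1 v2 v3 v4 : ℝ) : ℝ :=
  (1/16) * (1 + 1/m) * ((v1^2 + v2^2)*(u3^2 + u4^2) + (v3^2 + v4^2)*(u1^2 + u2^2))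
  + (1/8) * (1 - 1/m) * ((v3*u3 - v4*u4)*(v1*u1 - v2*u2) + (v3*u4 + v4*u3)*(v1*u2 + v2*u1))
  - (u1^2 + u2^2)*(u3^2 + u4^2) /
      Real.sqrt ((u1^2 - u2^2 + u3^2 - u4^2)^2 + (2*u1*u2 + 2*u3*u4)^2)
  - 2*m*(u1^2 + u2^2 + u3^2 + u4^2)
  - m^2*(u1^2 + u2^2)*(u3^2 + u4^2) /
      Real.sqrt ((u1^2 - u2^2 - u3^2 + u4^2)^2 + (2*u1*u2 - 2*u3*u4)^2)
  - E*(u1^2 + u2^2)*(u3^2 + u4^2)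

/-- Γ̂ is invariant under the `D₄` symmetry generators `S_F` and `S_G`:
`S_F : (u,v) ↦ (−u3, u4, u1, −u2, −v3, v4, v1, −v2)` and
`S_G : (u,v) ↦ (−u1, −u2, u3, u4, v1, v2, −v3, −v4)`. -/
theorem GammaHat_symmetry (m E : ℝ) (hm : 0 < m) :
    (∀ u1 u2 u3 u4 v1 v2 v3 v4 : ℝ,
      GammaHat m E (-u3) u4 u1 (-u2) (-v3) v4 v1 (-v2) =
        GammaHat m E u1 u2 u3 u4 v1 v2 v3 v4) ∧
    (∀ u1 u2 u3 u4 v1 v2 v3 v4 : ℝ,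
      GammaHat m E (-u1) (-u2) u3 u4 v1 v2 (-v3) (-v4) =
        GammaHat m E u1 u2 u3 u4 v1 v2 v3 v4) := by
  constructor <;> intro u1 u2 u3 u4 v1 v2 v3 v4 <;> unfold GammaHat <;> ring_nf

end
end

section
/- For the planar pairwise symmetric four-body problem, the angular momentum A = x1 ω2 − x2 ω1 + x3 ω4 − x4 ω3, expressed through the two canonical transformations g = (x differences/sums), h = (ω combinations), and the Levi-Civita variables (u, v), equals A = (1/2)(−v1 u2 + v2 u1 − v3 u4 + v4 u3). -/
/-- The angular momentum `A = x1 ω2 − x2 ω1 + x3 ω4 − x4 ω3`, expressed through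
the two canonical transformations of the regularization, equals
`(1/2)(−v1 u2 + v2 u1 − v3 u4 + v4 u3)`. -/
theorem angular_momentum_regularized (u1 u2 u3 u4 v1 v2 v3 v4 : ℝ)
    (h12 : u1^2 + u2^2 ≠ 0) (h34 : u3^2 + u4^2 ≠ 0)
    (g1 g2 g3 g4 h1 h2 h3 h4 x1 x2 x3 x4 ω1 ω2 ω3 ω4 : ℝ)
    (hg1 : g1 = u1^2 - u2^2) (hg2 : g2 = 2*u1*u2)
    (hg3 : g3 = u3^2 - u4^2) (hg4 : g4 = 2*u3*u4)
    (hh1 : h1 = (v1*u1 - v2*u2) / (2*(u1^2 + u2^2)))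
    (hh2 : h2 = (v1*u2 + v2*u1) / (2*(u1^2 + u2^2)))
    (hh3 : h3 = (v3*u3 - v4*u4) / (2*(u3^2 + u4^2)))
    (hh4 : h4 = (v3*u4 + v4*u3) / (2*(u3^2 + u4^2)))
    (hx1 : x1 = (g1 + g3)/2) (hx2 : x2 = (g2 + g4)/2)
    (hx3 : x3 = (g3 - g1)/2) (hx4 : x4 = (g4 - g2)/2)
    (hω1 : ω1 = h1 + h3) (hω2 : ω2 = h2 + h4)
    (hω3 : ω3 = -h1 + h3) (hω4 : ω4 = -h2 + h4) :
    x1*ω2 - x2*ω1 + x3*ω4 - x4*ω3 =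
      (1/2) * (-v1*u2 + v2*u1 - v3*u4 + v4*u3) := by
  subst hg1 hg2 hg3 hg4 hh1 hh2 hh3 hh4 hx1 hx2 hx3 hx4 hω1 hω2 hω3 hω4
  field_simp
  ring
end
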